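/- The quantitative semantics of STL is sound with respect to the Boolean semantics: for any STL formula φ, trace w, and time t, if ρ(φ,w,t) > 0 then w,t ⊨ φ, and if ρ(φ,w,t) < 0 then w,t ⊭ φ. -/

import Mathlib

inductive STL (X : Type*) where
  | top : STL X
  | atom : (X → ℝ) → STL X
  | neg : STL X → STL X
  | conj : STL X → STL X → STL X
  | untl : STL X → STL X → STL X

def STL.sat {X : Type*} (w : ℕ → X) : STL X → ℕ → Prop
  | .top, _ => True
  | .atom f, t => f (w t) > 0
  | .neg φ, t => ¬ STL.sat w φ t
  | .conj φ ψ, t => STL.sat w φ t ∧ STL.sat w ψ t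
  | .untl φ ψ, t => ∃ t', t ≤ t' ∧ STL.sat w ψ t' ∧ ∀ t'', t ≤ t'' → t'' < t' → STL.sat w φ t''

/-- Quantitative semantics of STL with values in the extended reals. -/
noncomputable def STL.rho {X : Type*} (w : ℕ → X) : STL X → ℕ → EReal
  | .top, _ => ⊤
  | .atom f, t => ((f (w t) : ℝ) : EReal)
  | .neg φ, t => - STL.rho w φ t
  | .conj φ ψ, t => min (STL.rho w φ t) (STL.rho w ψ t)
  | .untl φ ψ, t =>
      ⨆ t' : {t' : ℕ // t ≤ t'},
        min (STL.rho w ψ t'.1)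
          (⨅ t'' : {t'' : ℕ // t ≤ t'' ∧ t'' < t'.1}, STL.rho w φ t''.1)

namespace STL

variable {X : Type*} (w : ℕ → X)

/- Both implications are carried through the induction together, since negation exchanges them. -/
def RhoSound (φ : STL X) : Prop :=
  ∀ t, (0 < rho w φ t → sat w φ t) ∧ (rho w φ t < 0 → ¬ sat w φ t)

variable {w}

theorem rhoSound_top : RhoSound w (top : STL X) := fun _ =>
  ⟨fun _ => trivial, fun h => absurd h (by simp [rho])⟩

theorem rhoSound_atom (f : X → ℝ) : RhoSound w (atom f) := fun t => by
  simp only [rho, sat, ← EReal.coe_zero, EReal.coe_lt_coe_iff]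
  exact ⟨id, fun h hs => (lt_asymm h hs).elim⟩

theorem RhoSound.neg {φ : STL X} (hφ : RhoSound w φ) : RhoSound w (neg φ) := fun t => by
  simp only [rho, sat, EReal.neg_pos, EReal.neg_lt_zero, not_not]
  exact ⟨(hφ t).2, (hφ t).1⟩

theorem RhoSound.conj {φ ψ : STL X} (hφ : RhoSound w φ) (hψ : RhoSound w ψ) :
    RhoSound w (conj φ ψ) := fun t => by
  simp only [rho, sat, lt_min_iff, min_lt_iff]
  refine ⟨fun h => ⟨(hφ t).1 h.1, (hψ t).1 h.2⟩, ?_⟩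
  rintro (h | h) ⟨sφ, sψ⟩
  exacts [(hφ t).2 h sφ, (hψ t).2 h sψ]

theorem RhoSound.untl {φ ψ : STL X} (hφ : RhoSound w φ) (hψ : RhoSound w ψ) :
    RhoSound w (untl φ ψ) := fun t => by
  rw [rho, sat]
  constructor
  · intro h
    obtain ⟨⟨t', htt'⟩, h⟩ := lt_iSup_iff.mp h
    obtain ⟨hψt', hφ_before⟩ := lt_min_iff.mp h
    refine ⟨t', htt', (hψ t').1 hψt', fun t'' ht'' ht''t' => (hφ t'').1 ?_⟩
    exact hφ_before.trans_le (iInf_le_of_le ⟨t'', ht'', ht''t'⟩ le_rfl)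
  · rintro h ⟨t', htt', sψ, sφ⟩
    have hterm := (le_iSup_of_le ⟨t', htt'⟩ le_rfl).trans_lt h
    rcases min_lt_iff.mp hterm with hψt' | hφ_before
    · exact (hψ t').2 hψt' sψ
    · obtain ⟨⟨t'', ht'', ht''t'⟩, hφt''⟩ := iInf_lt_iff.mp hφ_before
      exact (hφ t'').2 hφt'' (sφ t'' ht'' ht''t')

end STL

/-- soundness of the quantitative semantics w.r.t. the Boolean semantics:
positive robustness implies satisfaction, negative robustness implies violation. -/
theorem stl_quantitative_sound {X : Type*} (w : ℕ → X) (φ : STL X) (t : ℕ) :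
    ((0 : EReal) < STL.rho w φ t → STL.sat w φ t) ∧
    (STL.rho w φ t < (0 : EReal) → ¬ STL.sat w φ t) := by
  suffices h : STL.RhoSound w φ from h t
  induction φ with
  | top => exact STL.rhoSound_top
  | atom f => exact STL.rhoSound_atom f
  | neg φ hφ => exact hφ.neg
  | conj φ ψ hφ hψ => exact hφ.conj hψ
  | untl φ ψ hφ hψ => exact hφ.untl hψ
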